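/- arXiv:1204.1664 — 3 statements merged into one kernel-verified Lean document; each statement's English description precedes it below -/
import Mathlib

section
/- The minimax estimation error over the unit ball of H among all linear estimators is achieved by the Bayesian quadrature weights: inf_{w ∈ ℝ^N} sup_{‖f‖_H ≤ 1} |∫ f dp − Σ_n w_n f(x_n)|² = ‖μ_p‖² − zᵀK^{-1}z, attained at w = K^{-1}z. -/
open MeasureTheory RealInnerProductSpace Matrix

lemma sup_inner_sq {H : Type*} [NormedAddCommGroup H] [InnerProductSpace ℝ H] (v : H) :
    sSup {e : ℝ | ∃ f : H, ‖f‖ ≤ 1 ∧ e = ⟪f, v⟫ ^ 2} = ‖v‖ ^ 2 := by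
  apply IsGreatest.csSup_eq
  constructor
  · by_cases hv : v = 0
    · exact ⟨0, by simp [hv]⟩
    · refine ⟨‖v‖⁻¹ • v, ?_, ?_⟩
      · simp [norm_smul, inv_mul_cancel₀ (norm_ne_zero_iff.mpr hv)]
      · have hne := norm_ne_zero_iff.mpr hv
        have h4 : ‖v‖⁻¹ * ‖v‖ ^ 2 = ‖v‖ := by
          rw [sq, ← mul_assoc, inv_mul_cancel₀ hne, one_mul]
        rw [real_inner_smul_left, real_inner_self_eq_norm_sq, h4]
  · rintro e ⟨f, hf, rfl⟩
    have h1 : |⟪f, v⟫| ≤ ‖f‖ * ‖v‖ := abs_real_inner_le_norm f v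
    have h2 : ⟪f, v⟫ ^ 2 ≤ (‖f‖ * ‖v‖) ^ 2 := sq_le_sq' (neg_le_of_abs_le h1) (le_of_abs_le h1)
    refine h2.trans ?_
    have h3 : ‖f‖ * ‖v‖ ≤ ‖v‖ := mul_le_of_le_one_left (norm_nonneg v) hf
    exact pow_le_pow_left₀ (by positivity) h3 2

/-- The minimax estimation error over the unit ball of the RKHS among all linear
(weighted) estimators equals `‖μp‖² − zᵀK⁻¹z`, and it is attained at the Bayesian
quadrature weights `w = K⁻¹ z`.  Here `K` is the positive definite Gram matrix,
`zₙ = ⟪μp, k(·,xₙ)⟫`, `f x = ⟪f, φ x⟫`, and `∫ f dp = ⟪f, μp⟫`. -/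
theorem minimax_linear_estimator
    {X : Type*}
    {H : Type*} [NormedAddCommGroup H] [InnerProductSpace ℝ H]
    (φ : X → H) (μp : H)
    (N : ℕ) (x : Fin N → X)
    (K : Matrix (Fin N) (Fin N) ℝ)
    (hK : ∀ n m, K n m = ⟪φ (x n), φ (x m)⟫) (hKpd : K.PosDef)
    (z : Fin N → ℝ) (hz : ∀ n, z n = ⟪μp, φ (x n)⟫) :
    letI S : (Fin N → ℝ) → ℝ := fun w =>
      sSup {e : ℝ | ∃ f : H, ‖f‖ ≤ 1 ∧
        e = (⟪f, μp⟫ - ∑ n, w n * ⟪f, φ (x n)⟫) ^ 2}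
    (⨅ w : Fin N → ℝ, S w) = ‖μp‖ ^ 2 - z ⬝ᵥ (K⁻¹ *ᵥ z)
      ∧ S (K⁻¹ *ᵥ z) = ‖μp‖ ^ 2 - z ⬝ᵥ (K⁻¹ *ᵥ z) := by
  beta_reduce
  set S : (Fin N → ℝ) → ℝ := fun w =>
    sSup {e : ℝ | ∃ f : H, ‖f‖ ≤ 1 ∧
      e = (⟪f, μp⟫ - ∑ n, w n * ⟪f, φ (x n)⟫) ^ 2} with hSdef
  have hdet : IsUnit K.det := isUnit_iff_ne_zero.mpr hKpd.det_pos.ne'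
  set w₀ : Fin N → ℝ := K⁻¹ *ᵥ z with hw₀
  have hKw₀ : K *ᵥ w₀ = z := by
    rw [hw₀, mulVec_mulVec, Matrix.mul_nonsing_inv _ hdet, one_mulVec]
  have hS1 : ∀ w, S w = ‖μp - ∑ n, w n • φ (x n)‖ ^ 2 := by
    intro w
    have : {e : ℝ | ∃ f : H, ‖f‖ ≤ 1 ∧ e = (⟪f, μp⟫ - ∑ n, w n * ⟪f, φ (x n)⟫) ^ 2}
        = {e : ℝ | ∃ f : H, ‖f‖ ≤ 1 ∧ e = ⟪f, μp - ∑ n, w n • φ (x n)⟫ ^ 2} := by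
      ext e
      constructor <;> rintro ⟨f, hf, rfl⟩ <;>
        exact ⟨f, hf, by simp [inner_sub_right, inner_sum, real_inner_smul_right]⟩
    rw [hSdef]
    dsimp only
    rw [this, sup_inner_sq]
  have hS2 : ∀ w, S w = ‖μp‖ ^ 2 - 2 * (w ⬝ᵥ z) + w ⬝ᵥ (K *ᵥ w) := by
    intro w
    rw [hS1 w, norm_sub_sq_real]
    have e1 : ⟪μp, ∑ n, w n • φ (x n)⟫ = w ⬝ᵥ z := by
      simp [inner_sum, real_inner_smul_right, dotProduct, hz, mul_comm]
    have e2 : ‖∑ n, w n • φ (x n)‖ ^ 2 = w ⬝ᵥ (K *ᵥ w) := by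
      rw [← real_inner_self_eq_norm_sq]
      simp only [inner_sum, sum_inner, real_inner_smul_left, real_inner_smul_right,
        dotProduct, mulVec, hK]
      rw [Finset.sum_comm]
      congr 1; ext n
      rw [Finset.mul_sum]
      congr 1; ext m
      ring
    rw [e1, e2]
  have hc : ‖μp‖ ^ 2 - 2 * (w₀ ⬝ᵥ z) + w₀ ⬝ᵥ (K *ᵥ w₀) = ‖μp‖ ^ 2 - z ⬝ᵥ w₀ := by
    rw [hKw₀, dotProduct_comm w₀ z]; ring
  have hSw₀ : S w₀ = ‖μp‖ ^ 2 - z ⬝ᵥ w₀ := by rw [hS2 w₀, hc]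
  have hlow : ∀ w, ‖μp‖ ^ 2 - z ⬝ᵥ w₀ ≤ S w := by
    intro w
    rw [hS2 w]
    have hpsd := hKpd.posSemidef.dotProduct_mulVec_nonneg (w - w₀)
    simp only [star_trivial] at hpsd
    have hexp : (w - w₀) ⬝ᵥ (K *ᵥ (w - w₀))
        = w ⬝ᵥ (K *ᵥ w) - w ⬝ᵥ z - w₀ ⬝ᵥ (K *ᵥ w) + w₀ ⬝ᵥ z := by
      rw [mulVec_sub, sub_dotProduct, dotProduct_sub, dotProduct_sub, hKw₀]
      ring
    have hsym : w₀ ⬝ᵥ (K *ᵥ w) = z ⬝ᵥ w := by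
      rw [dotProduct_mulVec]
      have : w₀ ᵥ* K = z := by
        have hKsymm : Kᵀ = K := by
          ext n m; simp only [transpose_apply, hK]; exact real_inner_comm _ _
        rw [← hKsymm, vecMul_transpose, hKw₀]
      rw [this]
    rw [hexp, hsym] at hpsd
    have hwz : z ⬝ᵥ w = w ⬝ᵥ z := dotProduct_comm z w
    have hwz0 : w₀ ⬝ᵥ z = z ⬝ᵥ w₀ := dotProduct_comm w₀ z
    nlinarith [hpsd]
  have hbdd : BddBelow (Set.range S) := by
    refine ⟨0, ?_⟩
    rintro _ ⟨w, rfl⟩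
    rw [hS1 w]; positivity
  constructor
  · apply le_antisymm
    · exact (ciInf_le hbdd w₀).trans_eq hSw₀
    · exact le_ciInf hlow
  · exact hSw₀
end

section
/- Let f : 2^X → ℝ be a monotone set function with f(∅) = 0 that is approximately submodular with constant ε ≥ 0 (i.e., f(A ∪ {x}) − f(A) ≥ f(B ∪ {x}) − f(B) − ε whenever A ⊆ B and x ∈ X). If A_n is constructed greedily by adding at each step an element maximizing the marginal gain, then f(A_n) ≥ (1 − 1/e) max_{|A| ≤ n} f(A) − n·ε. -/
lemma greedy_sum_marginals
    {X : Type*} [DecidableEq X]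
    (f : Finset X → ℝ) (ε : ℝ)
    (hsub : ∀ A B : Finset X, A ⊆ B → ∀ x : X,
      f (insert x A) - f A ≥ f (insert x B) - f B - ε)
    (S B : Finset X) :
    f (B ∪ S) ≤ f B + ∑ x ∈ S, (f (insert x B) - f B) + S.card * ε := by
  classical
  induction S using Finset.induction_on with
  | empty => simp
  | @insert y S hy ih =>
    have h1 : B ∪ insert y S = insert y (B ∪ S) := by
      ext z; simp [or_comm, or_left_comm]
    have h2 := hsub B (B ∪ S) Finset.subset_union_left y
    rw [h1, Finset.sum_insert hy, Finset.card_insert_of_notMem hy]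
    push_cast
    linarith

/-- Greedy guarantee for approximately submodular monotone set functions: if `f` is
monotone with `f ∅ = 0` and `ε`-approximately submodular, and `A n` is built greedily by
adding at each step an element maximising the marginal gain, then
`f (A n) ≥ (1 − 1/e) · max_{|S| ≤ n} f S − n ε`. -/
theorem greedy_approx_submodular
    {X : Type*} [Fintype X] [Nonempty X] [DecidableEq X]
    (f : Finset X → ℝ) (ε : ℝ) (hε : 0 ≤ ε)
    (hempty : f ∅ = 0)
    (hmono : ∀ A B : Finset X, A ⊆ B → f A ≤ f B)
    (hsub : ∀ A B : Finset X, A ⊆ B → ∀ x : X,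
      f (insert x A) - f A ≥ f (insert x B) - f B - ε)
    (A : ℕ → Finset X)
    (hA0 : A 0 = ∅)
    (hgreedy : ∀ k : ℕ, ∃ x : X,
      A (k + 1) = insert x (A k) ∧ ∀ y : X, f (insert y (A k)) ≤ f (insert x (A k)))
    (n : ℕ) (S : Finset X) (hS : S.card ≤ n) :
    f (A n) ≥ (1 - (Real.exp 1)⁻¹) * f S - n * ε := by
  have hfS : 0 ≤ f S := by
    have := hmono ∅ S (Finset.empty_subset S)
    linarith
  rcases Nat.eq_zero_or_pos n with hn | hn
  · subst hn
    interval_cases hSc : S.card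
    have : S = ∅ := Finset.card_eq_zero.mp hSc
    subst this
    simp [hA0, hempty]
  have hn1 : (1 : ℝ) ≤ n := by exact_mod_cast hn
  have hnpos : (0 : ℝ) < n := by linarith
  set c : ℝ := 1 - 1 / (n : ℝ) with hc
  have hc0 : 0 ≤ c := by
    have h : 1 / (n : ℝ) ≤ 1 := by
      rw [div_le_one hnpos]; exact hn1
    rw [hc]; linarith
  have hc1 : c ≤ 1 := by
    have : 0 ≤ 1 / (n : ℝ) := by positivity
    simp only [hc]; linarith
  -- main induction
  have key : ∀ k : ℕ, f S - f (A k) ≤ c ^ k * f S + k * ε := by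
    intro k
    induction k with
    | zero => simp [hA0, hempty]
    | succ k ih =>
      obtain ⟨x, hx1, hx2⟩ := hgreedy k
      set δ : ℝ := f (A (k + 1)) - f (A k) with hδ
      have hδ0 : 0 ≤ δ := by
        have := hmono (A k) (A (k+1)) (by rw [hx1]; exact Finset.subset_insert x (A k))
        linarith
      -- f S ≤ f (A k) + n * (δ + ε)
      have hstep : f S ≤ f (A k) + n * (δ + ε) := by
        have h1 : f S ≤ f (A k ∪ S) := hmono S _ Finset.subset_union_right
        have h2 := greedy_sum_marginals f ε hsub S (A k)
        have h3 : ∑ y ∈ S, (f (insert y (A k)) - f (A k)) ≤ S.card * δ := by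
          calc ∑ y ∈ S, (f (insert y (A k)) - f (A k))
              ≤ ∑ _y ∈ S, δ := by
                apply Finset.sum_le_sum
                intro y _
                have := hx2 y
                rw [hδ, hx1]
                linarith
            _ = S.card * δ := by rw [Finset.sum_const, nsmul_eq_mul]
        have hcard : (S.card : ℝ) ≤ n := by exact_mod_cast hS
        have h4 : (S.card : ℝ) * δ + (S.card : ℝ) * ε ≤ n * δ + n * ε := by
          have := mul_le_mul_of_nonneg_right hcard hδ0
          have := mul_le_mul_of_nonneg_right hcard hε
          linarith
        nlinarith [h1, h2, h3]
      -- hence δ ≥ (f S - f (A k))/n - ε, i.e. n*δ ≥ f S - f(A k) - n*ε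
      have hδge : f S - f (A k) - n * ε ≤ n * δ := by linarith
      -- g_{k+1} = g_k - δ ≤ c * g_k + ε
      have hrec : f S - f (A (k + 1)) ≤ c * (f S - f (A k)) + ε := by
        have hne : (n : ℝ) ≠ 0 := ne_of_gt hnpos
        have : δ ≥ (f S - f (A k)) / n - ε := by
          rw [ge_iff_le, sub_le_iff_le_add, div_le_iff₀ hnpos]
          linarith
        have hcg : c * (f S - f (A k)) = (f S - f (A k)) - (f S - f (A k)) / n := by
          rw [hc]; ring
        rw [hcg]
        linarith [hδ]
      have := mul_le_mul_of_nonneg_left ih hc0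
      calc f S - f (A (k + 1)) ≤ c * (f S - f (A k)) + ε := hrec
        _ ≤ c * (c ^ k * f S + k * ε) + ε := by linarith
        _ = c ^ (k + 1) * f S + (c * k * ε + ε) := by ring
        _ ≤ c ^ (k + 1) * f S + (k + 1 : ℕ) * ε := by
            have hk0 : (0:ℝ) ≤ (k:ℝ) := Nat.cast_nonneg k
            have hck : c * (k:ℝ) ≤ (k:ℝ) := mul_le_of_le_one_left hk0 hc1
            have : c * k * ε ≤ k * ε := mul_le_mul_of_nonneg_right hck hε
            push_cast
            linarith
  -- c^n ≤ exp(-1)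
  have hcn : c ^ n ≤ (Real.exp 1)⁻¹ := by
    have h1 : c ≤ Real.exp (-(1 / n)) := by
      have := Real.add_one_le_exp (-(1 / (n:ℝ)))
      simp only [hc]; linarith
    have h2 : c ^ n ≤ Real.exp (-(1 / n)) ^ n :=
      pow_le_pow_left₀ hc0 h1 n
    have h3 : Real.exp (-(1 / (n:ℝ))) ^ n = Real.exp (-1) := by
      rw [← Real.exp_nat_mul]
      congr 1
      field_simp
    rw [h3, Real.exp_neg] at h2
    exact h2
  have hfinal := key n
  have : c ^ n * f S ≤ (Real.exp 1)⁻¹ * f S :=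
    mul_le_mul_of_nonneg_right hcn hfS
  linarith
end

section
/- Let f : 2^X → ℝ be a monotone submodular set function with f(∅) = 0, and let A_n be constructed greedily. Then f(A_n) ≥ (1 − (1 − 1/n)^n) max_{|A| ≤ n} f(A) ≥ (1 − 1/e) max_{|A| ≤ n} f(A). -/
lemma sub_sum_le_aux {X : Type*} [DecidableEq X]
    (f : Finset X → ℝ)
    (hsub : ∀ A B : Finset X, A ⊆ B → ∀ x : X,
      f (insert x A) - f A ≥ f (insert x B) - f B) :
    ∀ (T B : Finset X), f (B ∪ T) - f B ≤ ∑ x ∈ T, (f (insert x B) - f B) := by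
  intro T
  induction T using Finset.induction_on with
  | empty => intro B; simp
  | @insert a T ha ih =>
    intro B
    rw [Finset.sum_insert ha]
    have h1 : B ∪ insert a T = insert a (B ∪ T) := by
      ext x; simp [or_comm, or_left_comm]
    rw [h1]
    have h2 := hsub B (B ∪ T) Finset.subset_union_left a
    have h3 := ih B
    linarith

/-- Classical greedy guarantee for monotone submodular set functions with `f ∅ = 0`:
the greedy set `A n` satisfies
`f (A n) ≥ (1 − (1 − 1/n)ⁿ) · max_{|S| ≤ n} f S ≥ (1 − 1/e) · max_{|S| ≤ n} f S`. -/
theorem greedy_submodular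
    {X : Type*} [Fintype X] [Nonempty X] [DecidableEq X]
    (f : Finset X → ℝ)
    (hempty : f ∅ = 0)
    (hmono : ∀ A B : Finset X, A ⊆ B → f A ≤ f B)
    (hsub : ∀ A B : Finset X, A ⊆ B → ∀ x : X,
      f (insert x A) - f A ≥ f (insert x B) - f B)
    (A : ℕ → Finset X)
    (hA0 : A 0 = ∅)
    (hgreedy : ∀ k : ℕ, ∃ x : X,
      A (k + 1) = insert x (A k) ∧ ∀ y : X, f (insert y (A k)) ≤ f (insert x (A k)))
    (n : ℕ) (S : Finset X) (hS : S.card ≤ n) :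
    f (A n) ≥ (1 - (1 - 1 / (n : ℝ)) ^ n) * f S
      ∧ (1 - (1 - 1 / (n : ℝ)) ^ n) * f S ≥ (1 - (Real.exp 1)⁻¹) * f S := by
  have hfS : 0 ≤ f S := by rw [← hempty]; exact hmono ∅ S (Finset.empty_subset S)
  rcases Nat.eq_zero_or_pos n with hn | hn
  · subst hn
    have hSe : S = ∅ := Finset.card_eq_zero.mp (Nat.le_zero.mp hS)
    subst hSe
    rw [hA0, hempty]
    norm_num
  · have hn1 : (1:ℝ) ≤ n := by exact_mod_cast hn
    have hnpos : (0:ℝ) < n := by linarith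
    have hfrac : (0:ℝ) ≤ 1 - 1/n := by
      rw [sub_nonneg, div_le_one hnpos]; exact hn1
    have key : ∀ k, f S - f (A (k+1)) ≤ (1 - 1/(n:ℝ)) * (f S - f (A k)) := by
      intro k
      obtain ⟨x, hx, hmax⟩ := hgreedy k
      have hgain : ∀ y ∈ S, f (insert y (A k)) - f (A k) ≤ f (A (k+1)) - f (A k) := by
        intro y _; rw [hx]; linarith [hmax y]
      have hsum := sub_sum_le_aux f hsub S (A k)
      have hsum2 : ∑ x ∈ S, (f (insert x (A k)) - f (A k))
          ≤ S.card * (f (A (k+1)) - f (A k)) := by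
        calc ∑ x ∈ S, (f (insert x (A k)) - f (A k))
            ≤ ∑ _x ∈ S, (f (A (k+1)) - f (A k)) := Finset.sum_le_sum hgain
          _ = S.card * (f (A (k+1)) - f (A k)) := by rw [Finset.sum_const, nsmul_eq_mul]
      have hgain0 : 0 ≤ f (A (k+1)) - f (A k) := by
        rw [hx]
        have := hmono (A k) (insert x (A k)) (Finset.subset_insert x (A k))
        linarith
      have hcard : (S.card : ℝ) ≤ n := by exact_mod_cast hS
      have h4 : (S.card : ℝ) * (f (A (k+1)) - f (A k)) ≤ n * (f (A (k+1)) - f (A k)) :=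
        mul_le_mul_of_nonneg_right hcard hgain0
      have h5 : f S ≤ f (A k ∪ S) := hmono S _ Finset.subset_union_right
      have h6 : f S - f (A k) ≤ n * (f (A (k+1)) - f (A k)) := by linarith
      have h7 : (f S - f (A k)) / n ≤ f (A (k+1)) - f (A k) := by
        rw [div_le_iff₀ hnpos]; linarith
      have h8 : (1 - 1/(n:ℝ)) * (f S - f (A k))
          = (f S - f (A k)) - (f S - f (A k)) / n := by
        field_simp
      linarith
    have ind : ∀ k, f S - f (A k) ≤ (1 - 1/(n:ℝ))^k * f S := by
      intro k; induction k with
      | zero => simp [hA0, hempty]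
      | succ k ih =>
        calc f S - f (A (k+1)) ≤ (1-1/(n:ℝ)) * (f S - f (A k)) := key k
          _ ≤ (1-1/(n:ℝ)) * ((1-1/(n:ℝ))^k * f S) := mul_le_mul_of_nonneg_left ih hfrac
          _ = (1-1/(n:ℝ))^(k+1) * f S := by ring
    have hind := ind n
    have h1 : f (A n) ≥ (1 - (1-1/(n:ℝ))^n) * f S := by
      have he : (1 - (1-1/(n:ℝ))^n) * f S = f S - (1-1/(n:ℝ))^n * f S := by ring
      linarith
    refine ⟨h1, ?_⟩
    have hp : (1 - 1/(n:ℝ))^n ≤ (Real.exp 1)⁻¹ := by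
      have ha : (1 - 1/(n:ℝ)) ≤ Real.exp (-(1/n)) := by
        have := Real.add_one_le_exp (-(1/(n:ℝ))); linarith
      have hb : (1 - 1/(n:ℝ))^n ≤ (Real.exp (-(1/n)))^n := pow_le_pow_left₀ hfrac ha n
      have hc : (Real.exp (-(1/(n:ℝ))))^n = Real.exp ((n:ℝ) * (-(1/n))) :=
        (Real.exp_nat_mul _ n).symm
      have hd : (n:ℝ) * (-(1/n)) = -1 := by field_simp
      rw [hc, hd, Real.exp_neg] at hb
      exact hb
    nlinarith [mul_le_mul_of_nonneg_right hp hfS]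
end
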